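/- Let K be a number field. Then the group of units of the ring of integers of K, i.e. the set {x ∈ K : both x and x⁻¹ are algebraic integers}, is a generalised polynomial subset of K. -/

import Mathlib

open Polynomial IntermediateField

/-- Generalised polynomial maps `ℝ^d → ℝ`: the smallest class of functions containing
constants and `ℝ`-linear functionals, closed under addition, multiplication and
pointwise integer part. -/
inductive IsGP : {d : ℕ} → ((Fin d → ℝ) → ℝ) → Prop
  | const {d : ℕ} (c : ℝ) : IsGP (fun _ : Fin d → ℝ => c)
  | linear {d : ℕ} (φ : (Fin d → ℝ) →ₗ[ℝ] ℝ) : IsGP (fun x => φ x)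
  | add {d : ℕ} {f g : (Fin d → ℝ) → ℝ} : IsGP f → IsGP g → IsGP (fun x => f x + g x)
  | mul {d : ℕ} {f g : (Fin d → ℝ) → ℝ} : IsGP f → IsGP g → IsGP (fun x => f x * g x)
  | floor {d : ℕ} {f : (Fin d → ℝ) → ℝ} : IsGP f → IsGP (fun x => (⌊f x⌋ : ℝ))

/-- A real-valued map on a number field `K` is a generalised polynomial map on `K` if,
in the coordinates given by some `ℚ`-basis of `K`, it is given by a generalised
polynomial map `ℝ^n → ℝ`. -/
def IsGPMapR {K : Type*} [Field K] [Algebra ℚ K] (f : K → ℝ) : Prop :=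
  ∃ (n : ℕ) (b : Module.Basis (Fin n) ℚ K) (g : (Fin n → ℝ) → ℝ),
    IsGP g ∧ ∀ x : K, f x = g (fun i => ((b.repr x) i : ℝ))

/-- A complex-valued map on `K` is a generalised polynomial map if its real and
imaginary parts are. -/
def IsGPMapC {K : Type*} [Field K] [Algebra ℚ K] (f : K → ℂ) : Prop :=
  IsGPMapR (fun x => (f x).re) ∧ IsGPMapR (fun x => (f x).im)

/-- A generalised polynomial subset of a number field `K`. -/
def IsGPSet {K : Type*} [Field K] [Algebra ℚ K] (S : Set K) : Prop :=
  IsGPMapR (S.indicator fun _ => (1 : ℝ))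

/-- A generalised polynomial subset of `ℚ`. -/
def IsGPSetQ (S : Set ℚ) : Prop :=
  ∃ g : (Fin 1 → ℝ) → ℝ, IsGP g ∧
    (∀ q : ℚ, q ∈ S → g (fun _ => (q : ℝ)) = 1) ∧
    (∀ q : ℚ, q ∉ S → g (fun _ => (q : ℝ)) = 0)

/-- A generalised polynomial subset of `ℤ`. -/
def IsGPSetZ (E : Set ℤ) : Prop :=
  ∃ g : (Fin 1 → ℝ) → ℝ, IsGP g ∧
    (∀ m : ℤ, m ∈ E → g (fun _ => (m : ℝ)) = 1) ∧
    (∀ m : ℤ, m ∉ E → g (fun _ => (m : ℝ)) = 0)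

/-- A Pisot number: a real algebraic integer `β > 1` all of whose other conjugates
have absolute value `< 1`. -/
def IsPisot (β : ℝ) : Prop :=
  IsIntegral ℤ β ∧ 1 < β ∧
    ∀ α : ℂ, aeval α (minpoly ℚ β) = 0 → α ≠ (β : ℂ) → ‖α‖ < 1

/-- A Pisot unit: a Pisot number whose inverse is also an algebraic integer. -/
def IsPisotUnit (β : ℝ) : Prop := IsPisot β ∧ IsIntegral ℤ β⁻¹

/-- A Salem number: a real algebraic integer `β > 1` all of whose other conjugates
have absolute value `≤ 1`, with at least one conjugate of absolute value exactly `1`. -/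
def IsSalem (β : ℝ) : Prop :=
  IsIntegral ℤ β ∧ 1 < β ∧
    (∀ α : ℂ, aeval α (minpoly ℚ β) = 0 → α ≠ (β : ℂ) → ‖α‖ ≤ 1) ∧
    (∃ α : ℂ, aeval α (minpoly ℚ β) = 0 ∧ α ≠ (β : ℂ) ∧ ‖α‖ = 1)

/-- `u` is a linear recurrent sequence with characteristic polynomial `p`,
where `p = X^m - a_{m-1} X^{m-1} - ⋯ - a_0` (so `a_j = -p.coeff j`). -/
def IsLinRec (p : ℚ[X]) (u : ℕ → ℚ) : Prop :=
  ∀ i : ℕ, u (i + p.natDegree) =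
    ∑ j ∈ Finset.range p.natDegree, (-(p.coeff j)) * u (i + j)


/-- A root of unity in a monoid. -/
def IsRootOfUnity {F : Type*} [Monoid F] (ω : F) : Prop := ∃ n : ℕ, 0 < n ∧ ω ^ n = 1

section GPAux

/-- `gpdelta t = 1 + ⌊t⌋ + ⌊-t⌋` is `1` on integers and `0` elsewhere. -/
noncomputable def gpdelta (t : ℝ) : ℝ := 1 + (⌊t⌋ : ℝ) + (⌊-t⌋ : ℝ)

lemma gpdelta_intCast (m : ℤ) : gpdelta (m : ℝ) = 1 := by
  rw [gpdelta, ← Int.cast_neg, Int.floor_intCast, Int.floor_intCast]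
  push_cast
  ring

lemma gpdelta_of_ne_int {t : ℝ} (h : ∀ m : ℤ, t ≠ (m : ℝ)) : gpdelta t = 0 := by
  have hf : Int.fract t ≠ 0 := by
    intro h0
    apply h ⌊t⌋
    have := Int.self_sub_fract t
    rw [h0] at this
    linarith
  have hceil : (⌈t⌉ : ℝ) = t + 1 - Int.fract t := Int.ceil_eq_add_one_sub_fract hf
  have hfl : (⌊t⌋ : ℝ) = t - Int.fract t := by
    have := Int.self_sub_fract t; linarith
  have hneg : ⌊-t⌋ = -⌈t⌉ := Int.floor_neg
  rw [gpdelta, hneg]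
  push_cast
  rw [hceil, hfl]; ring

lemma IsGP.neg' {d : ℕ} {f : (Fin d → ℝ) → ℝ} (h : IsGP f) : IsGP (fun x => -f x) := by
  have := (IsGP.const (d := d) (-1)).mul h
  simpa using this

lemma IsGP.finsetSum {d : ℕ} {ι : Type*} [DecidableEq ι] (s : Finset ι)
    (f : ι → (Fin d → ℝ) → ℝ) (h : ∀ i ∈ s, IsGP (f i)) :
    IsGP (fun x => ∑ i ∈ s, f i x) := by
  induction s using Finset.induction_on with
  | empty => simpa using IsGP.const (d := d) 0
  | @insert a s ha ih =>
      simp only [Finset.sum_insert ha]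
      exact (h a (Finset.mem_insert_self a s)).add
        (ih fun i hi => h i (Finset.mem_insert_of_mem hi))

lemma IsGP.finsetProd {d : ℕ} {ι : Type*} [DecidableEq ι] (s : Finset ι)
    (f : ι → (Fin d → ℝ) → ℝ) (h : ∀ i ∈ s, IsGP (f i)) :
    IsGP (fun x => ∏ i ∈ s, f i x) := by
  induction s using Finset.induction_on with
  | empty => simpa using IsGP.const (d := d) 1
  | @insert a s ha ih =>
      simp only [Finset.prod_insert ha]
      exact (h a (Finset.mem_insert_self a s)).mul
        (ih fun i hi => h i (Finset.mem_insert_of_mem hi))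

lemma IsGP.proj {d : ℕ} (k : Fin d) : IsGP (fun c : Fin d → ℝ => c k) :=
  IsGP.linear (LinearMap.proj k)

lemma IsGP.gpdelta_comp {d : ℕ} {f : (Fin d → ℝ) → ℝ} (h : IsGP f) :
    IsGP (fun x => gpdelta (f x)) := by
  show IsGP (fun x => 1 + (⌊f x⌋ : ℝ) + (⌊-f x⌋ : ℝ))
  exact ((IsGP.const 1).add h.floor).add h.neg'.floor

end GPAux

/-- the group of units of the ring of integers of a number field `K`,
i.e. `{x ∈ K : x and x⁻¹ are algebraic integers}`, is a generalised polynomial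
subset of `K`. -/
theorem stmt7 {K : Type*} [Field K] [NumberField K] :
    IsGPSet {x : K | IsIntegral ℤ x ∧ IsIntegral ℤ x⁻¹} := by
  classical
  set S : Set K := {x : K | IsIntegral ℤ x ∧ IsIntegral ℤ x⁻¹} with hS
  set ι := Module.Free.ChooseBasisIndex ℤ (NumberField.RingOfIntegers K) with hι
  set N := Fintype.card ι with hN
  set e : ι ≃ Fin N := Fintype.equivFin ι with he
  set b : Module.Basis (Fin N) ℚ K := (NumberField.integralBasis K).reindex e with hb
  -- each basis vector is integral
  have hbint : ∀ i : Fin N, IsIntegral ℤ (b i) := by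
    intro i
    rw [hb, Module.Basis.reindex_apply, NumberField.integralBasis_apply]
    exact NumberField.RingOfIntegers.isIntegral_coe _
  -- characterization of integrality via coordinates
  have hcoords : ∀ x : K, IsIntegral ℤ x ↔ ∀ i, ∃ m : ℤ, b.repr x i = (m : ℚ) := by
    intro x
    constructor
    · intro hx i
      have hxmem : x ∈ integralClosure ℤ K := hx
      have hxeq : x = algebraMap (NumberField.RingOfIntegers K) K ⟨x, hxmem⟩ := rfl
      refine ⟨(NumberField.RingOfIntegers.basis K).repr ⟨x, hxmem⟩ (e.symm i), ?_⟩
      rw [hb, Module.Basis.repr_reindex_apply]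
      conv_lhs => rw [hxeq]
      refine (NumberField.integralBasis_repr_apply (K := K) ⟨x, hxmem⟩ (e.symm i)).trans ?_
      simp
    · intro h
      choose mc hmc using h
      have hx : x = ∑ i, (mc i : ℚ) • b i := by
        conv_lhs => rw [← Module.Basis.sum_repr b x]
        exact Finset.sum_congr rfl fun i _ => by rw [hmc i]
      rw [hx]
      have : (∑ i, (mc i : ℚ) • b i) ∈ integralClosure ℤ K := by
        apply Subalgebra.sum_mem
        intro i _
        rw [Int.cast_smul_eq_zsmul, zsmul_eq_mul]
        exact mul_mem (intCast_mem (integralClosure ℤ K) (mc i)) (hbint i)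
      exact this
  -- norm of an integral element is an integer
  have hnormint : ∀ y : K, IsIntegral ℤ y → ∃ m : ℤ, Algebra.norm ℚ y = (m : ℚ) := by
    intro y hy
    have h1 : IsIntegral ℤ (Algebra.norm ℚ y) := Algebra.isIntegral_norm ℚ hy
    obtain ⟨m, hm⟩ := IsIntegrallyClosed.isIntegral_iff.mp h1
    exact ⟨m, hm.symm⟩
  -- if x is integral with norm ±1, then x⁻¹ is integral
  have hinv_int : ∀ x : K, IsIntegral ℤ x → (Algebra.norm ℚ x = 1 ∨ Algebra.norm ℚ x = -1) →
      IsIntegral ℤ x⁻¹ := by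
    intro x hx hn
    have hxmem : x ∈ integralClosure ℤ K := hx
    set y : NumberField.RingOfIntegers K := ⟨x, hxmem⟩ with hy
    have hyx : (algebraMap (NumberField.RingOfIntegers K) K y) = x := rfl
    have hyu : IsUnit y := by
      rw [NumberField.isUnit_iff_norm]
      have : (RingOfIntegers.norm ℚ y : ℚ) = Algebra.norm ℚ x := by
        rfl
      rw [this]
      rcases hn with h | h <;> rw [h] <;> norm_num
    obtain ⟨u, hu⟩ := hyu
    have hmul : x * (algebraMap (NumberField.RingOfIntegers K) K ((u⁻¹ : (NumberField.RingOfIntegers K)ˣ) : NumberField.RingOfIntegers K)) = 1 := by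
      rw [← hyx, ← map_mul]
      have : y * ((u⁻¹ : (NumberField.RingOfIntegers K)ˣ) : NumberField.RingOfIntegers K) = 1 := by
        rw [← hu]; exact u.mul_inv
      rw [this, map_one]
    rw [inv_eq_of_mul_eq_one_right hmul]
    exact NumberField.RingOfIntegers.isIntegral_coe _
  -- if x ∈ S and x ≠ 0 then norm x = ±1
  have hnorm_unit : ∀ x : K, x ≠ 0 → x ∈ S → Algebra.norm ℚ x = 1 ∨ Algebra.norm ℚ x = -1 := by
    intro x hx0 hxS
    obtain ⟨hx, hxi⟩ := hxS
    obtain ⟨m, hm⟩ := hnormint x hx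
    obtain ⟨m', hm'⟩ := hnormint x⁻¹ hxi
    have hmm : (m : ℚ) * (m' : ℚ) = 1 := by
      rw [← hm, ← hm', ← map_mul, mul_inv_cancel₀ hx0, map_one]
    have hmm' : m * m' = 1 := by exact_mod_cast hmm
    have : m = 1 ∨ m = -1 := Int.isUnit_iff.mp (IsUnit.of_mul_eq_one (a := m) m' hmm')
    rcases this with h | h
    · left; rw [hm, h]; norm_num
    · right; rw [hm, h]; norm_num
  -- the matrix whose determinant computes the norm
  set q : Fin N → Fin N → Fin N → ℚ := fun i j k => Algebra.leftMulMatrix b (b k) i j with hq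
  set M : (Fin N → ℝ) → Matrix (Fin N) (Fin N) ℝ :=
    fun c => Matrix.of (fun i j => ∑ k, c k * (q i j k : ℝ)) with hM
  -- on coordinates of x, det (M c) is the norm of x
  have hMdet : ∀ x : K,
      (M (fun i => ((b.repr x) i : ℝ))).det = ((Algebra.norm ℚ x : ℚ) : ℝ) := by
    intro x
    have h1 : M (fun i => ((b.repr x) i : ℝ)) =
        (Rat.castHom ℝ).mapMatrix (Algebra.leftMulMatrix b x) := by
      ext i j
      have hx : Algebra.leftMulMatrix b x
          = ∑ k, b.repr x k • Algebra.leftMulMatrix b (b k) := by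
        conv_lhs => rw [← Module.Basis.sum_repr b x]
        rw [map_sum]
        exact Finset.sum_congr rfl fun k _ => by rw [map_smul]
      rw [hM]
      simp only [RingHom.mapMatrix_apply, Matrix.map_apply, Matrix.of_apply, Rat.coe_castHom]
      rw [hx]
      simp only [Finset.sum_apply, Matrix.sum_apply, Matrix.smul_apply, smul_eq_mul]
      push_cast
      rfl
    rw [h1, ← RingHom.map_det, Algebra.norm_eq_matrix_det b x]
    rfl
  -- the generalised polynomial
  set g : (Fin N → ℝ) → ℝ :=
    fun c => (∏ i, gpdelta (c i)) *
      gpdelta (Real.sqrt 2 * ((M c).det ^ 4 - (M c).det ^ 2)) with hg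
  refine ⟨N, b, g, ?_, ?_⟩
  · -- IsGP g
    have hMgp : ∀ i j, IsGP (fun c : Fin N → ℝ => M c i j) := by
      intro i j
      have : IsGP (fun c : Fin N → ℝ => ∑ k, c k * (q i j k : ℝ)) :=
        IsGP.finsetSum _ _ fun k _ => (IsGP.proj k).mul (IsGP.const _)
      exact this
    have hdetgp : IsGP (fun c : Fin N → ℝ => (M c).det) := by
      have h1 : (fun c : Fin N → ℝ => (M c).det) =
          fun c => ∑ σ : Equiv.Perm (Fin N),
            ((Equiv.Perm.sign σ : ℤ) : ℝ) * ∏ i, M c (σ i) i := by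
        funext c
        exact Matrix.det_apply' (M c)
      rw [h1]
      exact IsGP.finsetSum _ _ fun σ _ =>
        (IsGP.const _).mul (IsGP.finsetProd _ _ fun i _ => hMgp (σ i) i)
    have h2 : IsGP (fun c : Fin N → ℝ =>
        Real.sqrt 2 * ((M c).det ^ 4 - (M c).det ^ 2)) := by
      have h4 : IsGP (fun c : Fin N → ℝ => (M c).det ^ 4 - (M c).det ^ 2) := by
        have := ((((hdetgp.mul hdetgp).mul hdetgp).mul hdetgp).add
          ((hdetgp.mul hdetgp).neg'))
        convert this using 1
        funext c; ring
      exact (IsGP.const _).mul h4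
    exact (IsGP.finsetProd _ _ fun i _ => (IsGP.proj i).gpdelta_comp).mul h2.gpdelta_comp
  · -- the values agree
    intro x
    by_cases hx : IsIntegral ℤ x
    · -- coordinates are integers
      have hco := (hcoords x).mp hx
      choose mc hmc using hco
      have hprod : (∏ i, gpdelta (((b.repr x) i : ℝ))) = 1 := by
        apply Finset.prod_eq_one
        intro i _
        rw [hmc i]
        push_cast
        exact gpdelta_intCast (mc i)
      obtain ⟨m, hm⟩ := hnormint x hx
      have hdet : (M (fun i => ((b.repr x) i : ℝ))).det = (m : ℝ) := by
        rw [hMdet x, hm]; push_cast; rfl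
      have hval : g (fun i => ((b.repr x) i : ℝ)) =
          gpdelta (Real.sqrt 2 * ((m : ℝ) ^ 4 - (m : ℝ) ^ 2)) := by
        rw [hg]
        simp only [hdet, hprod, one_mul]
      by_cases hA : m ^ 4 - m ^ 2 = 0
      · -- x ∈ S
        have hm01 : m = 0 ∨ m = 1 ∨ m = -1 := by
          have h2 : m ^ 2 * (m ^ 2 - 1) = 0 := by ring_nf; linarith [hA]
          rcases mul_eq_zero.mp h2 with h | h
          · left; exact pow_eq_zero_iff (n := 2) (by norm_num) |>.mp h
          · have hsq : m * m = 1 := by nlinarith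
            rcases Int.isUnit_iff.mp (IsUnit.of_mul_eq_one (a := m) m hsq) with h1 | h1
            · right; left; exact h1
            · right; right; exact h1
        have hxS : x ∈ S := by
          rcases hm01 with h0 | h1
          · -- norm is 0, so x = 0
            have : Algebra.norm ℚ x = 0 := by rw [hm, h0]; norm_num
            have hx0 : x = 0 := by
              by_contra hne
              exact (Algebra.norm_ne_zero_iff.mpr hne) this
            rw [hS]
            constructor
            · exact hx
            · rw [hx0, inv_zero]; exact isIntegral_zero
          · refine ⟨hx, hinv_int x hx ?_⟩
            rcases h1 with h | h
            · left; rw [hm, h]; norm_num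
            · right; rw [hm, h]; norm_num
        have hind : S.indicator (fun _ => (1:ℝ)) x = 1 := Set.indicator_of_mem hxS _
        rw [hind, hval]
        have : Real.sqrt 2 * ((m : ℝ) ^ 4 - (m : ℝ) ^ 2) = 0 := by
          have : ((m : ℝ) ^ 4 - (m : ℝ) ^ 2) = ((m ^ 4 - m ^ 2 : ℤ) : ℝ) := by push_cast; ring
          rw [this, hA]; norm_num
        rw [this]
        have := gpdelta_intCast 0
        simpa using this.symm
      · -- x ∉ S
        have hxS : x ∉ S := by
          intro hxS
          have hx0 : x ≠ 0 := by
            intro h0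
            have : Algebra.norm ℚ x = 0 := by rw [h0, Algebra.norm_zero]
            rw [hm] at this
            have hm0 : m = 0 := by exact_mod_cast this
            apply hA; rw [hm0]; ring
          have hm1 : m = 1 ∨ m = -1 := by
            rcases hnorm_unit x hx0 hxS with h | h
            · left
              rw [hm] at h
              exact_mod_cast h
            · right
              rw [hm] at h
              exact_mod_cast h
          apply hA
          rcases hm1 with h | h <;> rw [h] <;> ring
        have hind : S.indicator (fun _ => (1:ℝ)) x = 0 := Set.indicator_of_notMem hxS _
        rw [hind, hval]
        have heq : Real.sqrt 2 * ((m : ℝ) ^ 4 - (m : ℝ) ^ 2)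
            = Real.sqrt 2 * ((m ^ 4 - m ^ 2 : ℤ) : ℝ) := by push_cast; ring
        rw [heq]
        have hirr : Irrational (Real.sqrt 2 * ((m ^ 4 - m ^ 2 : ℤ) : ℝ)) := by
          have := irrational_sqrt_two.mul_intCast (m := m ^ 4 - m ^ 2) hA
          simpa [mul_comm] using this
        exact (gpdelta_of_ne_int (fun k => hirr.ne_int k)).symm
    · -- x is not integral: some coordinate is not an integer
      have hxS : x ∉ S := fun hxS => hx hxS.1
      have hind : S.indicator (fun _ => (1:ℝ)) x = 0 := Set.indicator_of_notMem hxS _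
      obtain ⟨i₀, hi₀⟩ : ∃ i, ∀ m : ℤ, b.repr x i ≠ (m : ℚ) := by
        by_contra hcon
        push_neg at hcon
        exact hx ((hcoords x).mpr hcon)
      have hzero : gpdelta (((b.repr x) i₀ : ℝ)) = 0 := by
        apply gpdelta_of_ne_int
        intro m hme
        apply hi₀ m
        have : ((b.repr x i₀ : ℚ) : ℝ) = ((m : ℚ) : ℝ) := by rw [hme]; push_cast; rfl
        exact_mod_cast this
      rw [hind, hg]
      have : (∏ i, gpdelta (((b.repr x) i : ℝ))) = 0 :=
        Finset.prod_eq_zero (Finset.mem_univ i₀) hzero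
      simp only [this, zero_mul]
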